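/- arXiv:2512.06063 — 2 statements merged into one kernel-verified Lean document; each statement's English description precedes it below -/
import Mathlib

section
/- Let p be a prime. If the relative Frobenius F^e_{A/R} : A ⊗_R F^e_*R → F^e_*A of a homomorphism of F_p-algebras R → A is an isomorphism for some e ≥ 1, then F^{e'}_{A/R} is an isomorphism for all e' ≥ 1. -/
/-!
For `i + j = e`, the relative Frobenius `F^e_{A/R}` factors as `F^j_{A/R}` after the base change
of `F^i_{A/R}` along the Frobenius `F^j` of `R`. Hence surjectivity of `F^e` passes to every
`F^j` with `j ≤ e`. If `F^e` is bijective, the base change of the surjective `F^{e-1}` is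
surjective, which forces `F^1` to be injective too; a bijective `F^1` has a bijective base change,
and `F^{n+1} = F^n ∘ (base change of F^1)` climbs to every exponent.
-/

open TensorProduct

/-- `FStar p R` is `R` viewed as an `R`-algebra via the Frobenius `r ↦ r ^ p`. -/
def FStar (_p : ℕ) (R : Type*) : Type _ := R

instance (p : ℕ) (R : Type*) [CommRing R] : CommRing (FStar p R) :=
  inferInstanceAs (CommRing R)

noncomputable instance (p : ℕ) (R A : Type*) [CommRing R] [CommRing A] [Algebra R A]
    [ExpChar A p] : Algebra R (FStar p A) :=
  ((frobenius A p).comp (algebraMap R A)).toAlgebra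

/-- Frobenius of `A`, as a map `A →ₐ[R] FStar p A`. -/
noncomputable def frobAlgHom (p : ℕ) (R A : Type*) [CommRing R] [CommRing A] [Algebra R A]
    [ExpChar A p] : A →ₐ[R] FStar p A :=
  { frobenius A p with commutes' := fun _ => rfl }

/-- The structure map `F_*R → F_*A`, as a map of `R`-algebras. -/
noncomputable def fstarAlgHom (p : ℕ) (R A : Type*) [CommRing R] [CommRing A] [Algebra R A]
    [ExpChar R p] [ExpChar A p] : FStar p R →ₐ[R] FStar p A :=
  { (algebraMap R A : R →+* A) with
    commutes' := fun r => by
      show (algebraMap R A) (frobenius R p (algebraMap R R r)) = frobenius A p (algebraMap R A r)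
      simp [frobenius_def, map_pow] }

/-- The relative Frobenius `A ⊗[R] F_*R → F_*A`, `a ⊗ r ↦ a^p · r`. -/
noncomputable def relFrob (p : ℕ) (R A : Type*) [CommRing R] [CommRing A] [Algebra R A]
    [ExpChar R p] [ExpChar A p] : (A ⊗[R] FStar p R) →ₐ[R] FStar p A :=
  Algebra.TensorProduct.productMap (frobAlgHom p R A) (fstarAlgHom p R A)

/-- `FStarE p e R` is `R` viewed as an `R`-algebra via the `e`-th iterate of Frobenius. -/
def FStarE (_p _e : ℕ) (R : Type*) : Type _ := R

instance (p e : ℕ) (R : Type*) [CommRing R] : CommRing (FStarE p e R) :=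
  inferInstanceAs (CommRing R)

noncomputable instance (p e : ℕ) (R A : Type*) [CommRing R] [CommRing A] [Algebra R A]
    [ExpChar A p] : Algebra R (FStarE p e A) :=
  ((iterateFrobenius A p e).comp (algebraMap R A)).toAlgebra

/-- The `e`-th iterate of Frobenius of `A`, as a map `A →ₐ[R] FStarE p e A`. -/
noncomputable def frobAlgHomE (p e : ℕ) (R A : Type*) [CommRing R] [CommRing A] [Algebra R A]
    [ExpChar A p] : A →ₐ[R] FStarE p e A :=
  { iterateFrobenius A p e with commutes' := fun _ => rfl }

/-- The structure map `F^e_*R → F^e_*A`, as a map of `R`-algebras. -/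
noncomputable def fstarAlgHomE (p e : ℕ) (R A : Type*) [CommRing R] [CommRing A] [Algebra R A]
    [ExpChar R p] [ExpChar A p] : FStarE p e R →ₐ[R] FStarE p e A :=
  { (algebraMap R A : R →+* A) with
    commutes' := fun r => by
      show (algebraMap R A) (iterateFrobenius R p e (algebraMap R R r))
          = iterateFrobenius A p e (algebraMap R A r)
      simp [iterateFrobenius_def, map_pow] }

/-- The `e`-th relative Frobenius `A ⊗[R] F^e_*R → F^e_*A`, `a ⊗ r ↦ a^{p^e} · r`. -/
noncomputable def relFrobE (p e : ℕ) (R A : Type*) [CommRing R] [CommRing A] [Algebra R A]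
    [ExpChar R p] [ExpChar A p] : (A ⊗[R] FStarE p e R) →ₐ[R] FStarE p e A :=
  Algebra.TensorProduct.productMap (frobAlgHomE p e R A) (fstarAlgHomE p e R A)

open Function

noncomputable section

namespace FStarE

def toFStarE (p e : ℕ) (R : Type*) [CommRing R] : R ≃+* FStarE p e R := RingEquiv.refl R

variable {p : ℕ} {R : Type*} [CommRing R] [ExpChar R p] {i j e : ℕ}

theorem smul_def (s : R) (r : FStarE p e R) : s • r = toFStarE p e R (s ^ p ^ e) * r := rfl

def castₛₗ (h : i + j = e) : FStarE p e R →ₛₗ[iterateFrobenius R p i] FStarE p j R where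
  toFun r := toFStarE p j R ((toFStarE p e R).symm r)
  map_add' _ _ := rfl
  map_smul' s r := by
    rw [smul_def, smul_def, ← h, pow_add, pow_mul]
    rfl

theorem castₛₗ_bijective (h : i + j = e) : Bijective (castₛₗ (p := p) (R := R) h) :=
  (toFStarE p j R).bijective.comp (toFStarE p e R).symm.bijective

def iterateFrobeniusAlgHom (h : i + j = e) : FStarE p i R →ₐ[R] FStarE p e R where
  __ := iterateFrobenius R p j
  commutes' s := by
    show (s ^ p ^ i) ^ p ^ j = s ^ p ^ e
    rw [← h, pow_add, pow_mul]

end FStarE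

open FStarE

section RelFrobBaseChange

variable (p : ℕ) (R A : Type*) [CommRing R] [CommRing A] [Algebra R A] [ExpChar R p] [ExpChar A p]
  {i j e : ℕ} (h : i + j = e)

theorem relFrobE_tmul (a : A) (r : FStarE p e R) :
    relFrobE p e R A (a ⊗ₜ r) =
      toFStarE p e A (a ^ p ^ e * algebraMap R A ((toFStarE p e R).symm r)) :=
  rfl

theorem relFrobE_tmul_one (a : A) : relFrobE p e R A (a ⊗ₜ 1) = toFStarE p e A (a ^ p ^ e) := by
  rw [relFrobE_tmul, map_one, map_one, mul_one]

theorem relFrobE_one_tmul (s : R) :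
    relFrobE p e R A (1 ⊗ₜ toFStarE p e R s) = toFStarE p e A (algebraMap R A s) := by
  rw [relFrobE_tmul, one_pow, one_mul, RingEquiv.symm_apply_apply]

/-- The base change of `F^i_{A/R}` along the Frobenius `F^j` of `R`, once
`F^i_* A ⊗[F^i_* R] F^e_* R` is identified with `A ⊗[R] F^j_* R`. -/
def relFrobBaseChange :
    A ⊗[R] FStarE p e R →ₛₗ[iterateFrobenius R p i] A ⊗[R] FStarE p j R :=
  TensorProduct.map (LinearMap.iterateFrobenius R A p i) (castₛₗ h)

theorem castₛₗ_relFrobE (x : A ⊗[R] FStarE p e R) :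
    castₛₗ h (relFrobE p e R A x) = relFrobE p j R A (relFrobBaseChange p R A h x) := by
  induction x using TensorProduct.induction_on with
  | zero => simp only [map_zero]
  | tmul a r =>
    subst h
    rw [relFrobBaseChange, TensorProduct.map_tmul, relFrobE_tmul, relFrobE_tmul, pow_add, pow_mul]
    rfl
  | add x y hx hy => simp only [map_add, hx, hy]

theorem castₛₗ_comp_relFrobE :
    castₛₗ h ∘ relFrobE p e R A = relFrobE p j R A ∘ relFrobBaseChange p R A h :=
  funext (castₛₗ_relFrobE p R A h)

theorem relFrobBaseChange_map_mul_tmul (y : A ⊗[R] FStarE p i R) (c : FStarE p e R) :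
    relFrobBaseChange p R A h
        (Algebra.TensorProduct.map (AlgHom.id R A) (iterateFrobeniusAlgHom h) y * (1 ⊗ₜ c)) =
      (toFStarE p i A).symm (relFrobE p i R A y) ⊗ₜ castₛₗ h c := by
  induction y using TensorProduct.induction_on with
  | zero => simp only [map_zero, zero_mul, TensorProduct.zero_tmul]
  | tmul b s =>
    obtain ⟨s, rfl⟩ := (toFStarE p i R).surjective s
    have hs : castₛₗ h (toFStarE p e R (s ^ p ^ j) * c) = s • castₛₗ h c := rfl
    rw [Algebra.TensorProduct.map_tmul, Algebra.TensorProduct.tmul_mul_tmul, mul_one,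
      relFrobE_tmul, RingEquiv.symm_apply_apply, RingEquiv.symm_apply_apply, mul_comm (b ^ p ^ i),
      ← Algebra.smul_def, TensorProduct.smul_tmul]
    exact congrArg (fun x => (b ^ p ^ i) ⊗ₜ[R] x) hs
  | add x y hx hy => simp only [map_add, add_mul, hx, hy, TensorProduct.add_tmul]

theorem relFrobBaseChange_surjective (hi : Surjective (relFrobE p i R A)) :
    Surjective (relFrobBaseChange p R A h) := by
  intro z
  induction z using TensorProduct.induction_on with
  | zero => exact ⟨0, map_zero _⟩
  | tmul a c =>
    obtain ⟨y, hy⟩ := hi (toFStarE p i A a)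
    exact ⟨_, (relFrobBaseChange_map_mul_tmul p R A h y
      (toFStarE p e R ((toFStarE p j R).symm c))).trans (by rw [hy]; rfl)⟩
  | add x y hx hy =>
    obtain ⟨x', rfl⟩ := hx
    obtain ⟨y', rfl⟩ := hy
    exact ⟨x' + y', map_add _ _ _⟩

theorem relFrobBaseChange_bijective (hi : Bijective (relFrobE p i R A)) :
    Bijective (relFrobBaseChange p R A h) := by
  set Φ := RingEquiv.ofBijective (relFrobE p i R A) hi
  let φ₀ := Algebra.TensorProduct.map (AlgHom.id R A) (iterateFrobeniusAlgHom (p := p) (R := R) h)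
  let φ : FStarE p i A →+* A ⊗[R] FStarE p e R := φ₀.toRingHom.comp Φ.symm.toRingHom
  let κ : FStarE p j R →+* A ⊗[R] FStarE p e R :=
    Algebra.TensorProduct.includeRight.toRingHom.comp
      ((toFStarE p j R).symm.trans (toFStarE p e R)).toRingHom
  have hφ (y : A ⊗[R] FStarE p i R) : φ (relFrobE p i R A y) = φ₀ y :=
    congrArg φ₀ (Φ.symm_apply_apply y)
  have hφκ (s : R) : φ (toFStarE p i A (algebraMap R A s)) = κ (algebraMap R _ s) := by
    rw [← relFrobE_one_tmul p R A, hφ]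
    rfl
  let ψ : A ⊗[R] FStarE p j R →+ A ⊗[R] FStarE p e R :=
    TensorProduct.liftAddHom
      ((AddMonoidHom.mul.comp (φ.toAddMonoidHom.comp (toFStarE p i A).toAddMonoidHom)).compl₂
        κ.toAddMonoidHom)
      (fun s a r => by
        show φ (toFStarE p i A (s • a)) * κ r = φ (toFStarE p i A a) * κ (s • r)
        simp only [Algebra.smul_def, map_mul, hφκ]
        ring)
  refine ⟨LeftInverse.injective (g := ψ) fun x => ?_, relFrobBaseChange_surjective p R A h hi.2⟩
  induction x using TensorProduct.induction_on with
  | zero => simp only [map_zero]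
  | tmul a r =>
    show φ (toFStarE p i A (a ^ p ^ i)) * κ (castₛₗ h r) = a ⊗ₜ r
    rw [← relFrobE_tmul_one p R A, hφ, Algebra.TensorProduct.map_tmul, map_one]
    exact (Algebra.TensorProduct.tmul_mul_tmul _ _ _ _).trans (by rw [mul_one, one_mul]; rfl)
  | add x y hx hy => simp only [map_add, hx, hy]

end RelFrobBaseChange

section Descent

variable {p : ℕ} {R A : Type*} [CommRing R] [CommRing A] [Algebra R A] [ExpChar R p]
  [ExpChar A p] {i j e : ℕ}

theorem relFrobE_surjective_of_add (h : i + j = e) (he : Surjective (relFrobE p e R A)) :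
    Surjective (relFrobE p j R A) := by
  have hcomp := (castₛₗ_bijective (R := A) h).surjective.comp he
  rw [castₛₗ_comp_relFrobE] at hcomp
  exact hcomp.of_comp

theorem relFrobE_injective_of_add (h : i + j = e) (he : Injective (relFrobE p e R A))
    (hi : Surjective (relFrobE p i R A)) : Injective (relFrobE p j R A) := by
  have hcomp := (castₛₗ_bijective (R := A) h).injective.comp he
  rw [castₛₗ_comp_relFrobE] at hcomp
  exact hcomp.of_comp_right (relFrobBaseChange_surjective p R A h hi)

theorem relFrobE_bijective_of_add (h : i + j = e) (hi : Bijective (relFrobE p i R A))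
    (hj : Bijective (relFrobE p j R A)) : Bijective (relFrobE p e R A) := by
  rw [← (castₛₗ_bijective (R := A) h).of_comp_iff', castₛₗ_comp_relFrobE]
  exact hj.comp (relFrobBaseChange_bijective p R A h hi)

end Descent

end

/-- if the `e`-th relative Frobenius of `R → A` is an isomorphism for some
`e ≥ 1`, then it is an isomorphism for all `e' ≥ 1`. -/
theorem stmt_5 (p : ℕ) [Fact p.Prime] (R A : Type*) [CommRing R] [CommRing A] [Algebra R A]
    [CharP R p] [CharP A p]
    (he : ∃ e ≥ 1, Function.Bijective (relFrobE p e R A)) :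
    ∀ e' ≥ 1, Function.Bijective (relFrobE p e' R A) := by
  obtain ⟨_, he1, hbij⟩ := he
  obtain ⟨k, rfl⟩ := Nat.exists_eq_add_of_le' he1
  have h1 : Bijective (relFrobE p 1 R A) :=
    ⟨relFrobE_injective_of_add rfl hbij.1 (relFrobE_surjective_of_add (add_comm 1 k) hbij.2),
      relFrobE_surjective_of_add rfl hbij.2⟩
  intro e' he'
  induction e', he' using Nat.le_induction with
  | base => exact h1
  | succ n _ ih => exact relFrobE_bijective_of_add (add_comm 1 n) h1 ih
end

section
/- Let p be a prime, R = F_p[t^{a/p^b} : a, b ∈ ℤ_{>0}] the monoid algebra of the positive p-adic rationals over F_p, and a the ideal generated by all t^{a/p^b}. Then a^[p] = a, where a^[p] is the ideal generated by p-th powers of elements of a. Consequently the relative Frobenius of R → R/a is an isomorphism, but R → R/a is not flat. -/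
/-!
The exponent monoid is `p`-divisible, so every generator `t^m` of `a` is the `p`-th power of the
generator `t^(m/p)`; hence `a^[p] = a` and the relative Frobenius is the identity of `R/a`.
Since `R` is a domain, `t ∈ a` is a nonzerodivisor, which acts injectively on any flat module;
but `t` kills `1 ∈ R/a`, and `1 ≠ 0` there because `a` lies in the kernel of `t ↦ 0`.
-/

/-- The additive monoid of nonnegative `p`-adic rationals `{a/p^b : a, b ∈ ℕ}`. -/
def pAdicMonoid (p : ℕ) : AddSubmonoid ℚ :=
  AddSubmonoid.closure (Set.range fun ab : ℕ × ℕ => ((ab.1 : ℚ) / p ^ ab.2))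

/-- `R = 𝔽_p[t^{a/p^b} : a, b > 0]`, the monoid algebra of the nonnegative `p`-adic
rationals over `𝔽_p`. -/
abbrev PAdicRing (p : ℕ) : Type := AddMonoidAlgebra (ZMod p) (pAdicMonoid p)

/-- The ideal `a = (t^{a/p^b} : a, b > 0)` generated by all `t^m` with `m > 0`. -/
noncomputable def pAdicIdeal (p : ℕ) : Ideal (PAdicRing p) :=
  Ideal.span {x | ∃ m : pAdicMonoid p, (m : ℚ) ≠ 0 ∧ x = AddMonoidAlgebra.single m 1}

theorem pAdicIdeal_pow_le (p : ℕ) [Fact p.Prime] :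
    Ideal.span {x : PAdicRing p | ∃ y ∈ pAdicIdeal p, x = y ^ p} ≤ pAdicIdeal p := by
  rw [Ideal.span_le]
  rintro x ⟨y, hy, rfl⟩
  exact Ideal.pow_mem_of_mem _ hy p (Fact.out (p := p.Prime)).pos

theorem Ideal.Quotient.factor_bijective_of_eq {R : Type*} [CommRing R] {S T : Ideal R}
    (h : S = T) (H : S ≤ T) : Function.Bijective (Ideal.Quotient.factor H) :=
  (Ideal.quotEquivOfEq h).bijective

theorem Ideal.eq_top_of_isRegular_mem_of_flat {R : Type*} [CommRing R] {I : Ideal R}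
    [Module.Flat R (R ⧸ I)] {r : R} (hr : IsRegular r) (hrI : r ∈ I) : I = ⊤ := by
  have hreg : IsSMulRegular (R ⧸ I) r := Module.Flat.isSMulRegular_of_isRegular hr
  have hr0 : r • (1 : R ⧸ I) = r • 0 := by
    rw [smul_zero, Algebra.smul_def, mul_one, Ideal.Quotient.algebraMap_eq,
      Ideal.Quotient.eq_zero_iff_mem]
    exact hrI
  rw [← Ideal.Quotient.zero_eq_one_iff]
  exact (hreg hr0).symm

namespace AddMonoidAlgebra

variable {k M : Type*} [CommSemiring k] [AddCommMonoid M] [Subsingleton (AddUnits M)]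

open Classical in
noncomputable def constantCoeff : AddMonoidAlgebra k M →ₐ[k] k :=
  lift k k M
    { toFun := fun m => if m.toAdd = 0 then 1 else 0
      map_one' := by simp
      map_mul' := fun m n => by by_cases hm : m.toAdd = 0 <;> simp [hm] }

theorem constantCoeff_single_of_ne_zero {m : M} (hm : m ≠ 0) (r : k) :
    constantCoeff (single m r) = 0 := by
  simp [constantCoeff, lift_single, hm]

end AddMonoidAlgebra

theorem pAdicMonoid_nonneg (p : ℕ) {q : ℚ} (hq : q ∈ pAdicMonoid p) : 0 ≤ q := by
  induction hq using AddSubmonoid.closure_induction with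
  | mem x hx => obtain ⟨⟨a, b⟩, rfl⟩ := hx; positivity
  | zero => exact le_rfl
  | add x y _ _ hx hy => exact add_nonneg hx hy

theorem pAdicMonoid_div_mem (p : ℕ) {q : ℚ} (hq : q ∈ pAdicMonoid p) :
    q / p ∈ pAdicMonoid p := by
  induction hq using AddSubmonoid.closure_induction with
  | mem x hx =>
    obtain ⟨⟨a, b⟩, rfl⟩ := hx
    exact AddSubmonoid.subset_closure ⟨(a, b + 1), by dsimp only; rw [pow_succ, div_div]⟩
  | zero => simp
  | add x y _ _ hx hy => rw [add_div]; exact add_mem hx hy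

theorem pAdicMonoid_one_mem (p : ℕ) : (1 : ℚ) ∈ pAdicMonoid p :=
  AddSubmonoid.subset_closure ⟨(1, 0), by simp⟩

instance (p : ℕ) : Subsingleton (AddUnits (pAdicMonoid p)) where
  allEq u v := by
    have h (w : AddUnits (pAdicMonoid p)) : w = 0 := by
      have hsum : ((w : pAdicMonoid p) : ℚ) + ((↑(-w) : pAdicMonoid p) : ℚ) = 0 := by
        rw [← AddSubmonoid.coe_add, AddUnits.add_neg]; rfl
      ext
      exact ((add_eq_zero_iff_of_nonneg (pAdicMonoid_nonneg p (w : pAdicMonoid p).2)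
        (pAdicMonoid_nonneg p (↑(-w) : pAdicMonoid p).2)).mp hsum).1
    rw [h u, h v]

theorem pAdicMonoid_exists_nsmul_eq {p : ℕ} (hp : p ≠ 0) (m : pAdicMonoid p) :
    ∃ m' : pAdicMonoid p, p • m' = m :=
  ⟨⟨m / p, pAdicMonoid_div_mem p m.2⟩, Subtype.ext <| by
    simp [nsmul_eq_mul, mul_div_cancel₀ _ (Nat.cast_ne_zero.mpr hp : (p : ℚ) ≠ 0)]⟩

theorem single_one_mem_pAdicIdeal {p : ℕ} {m : pAdicMonoid p} (hm : m ≠ 0) :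
    AddMonoidAlgebra.single m 1 ∈ pAdicIdeal p :=
  Ideal.subset_span ⟨m, fun h => hm (Subtype.ext h), rfl⟩

theorem pAdicIdeal_le_ker_constantCoeff (p : ℕ) :
    pAdicIdeal p ≤ RingHom.ker (AddMonoidAlgebra.constantCoeff : PAdicRing p →ₐ[ZMod p] ZMod p) :=
  Ideal.span_le.mpr <| by
    rintro _ ⟨m, hm, rfl⟩
    exact AddMonoidAlgebra.constantCoeff_single_of_ne_zero (fun h => hm (congrArg _ h)) 1

theorem pAdicIdeal_ne_top (p : ℕ) [Fact p.Prime] : pAdicIdeal p ≠ ⊤ :=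
  ne_top_of_le_ne_top (RingHom.ker_ne_top _) (pAdicIdeal_le_ker_constantCoeff p)

theorem span_pow_pAdicIdeal (p : ℕ) [Fact p.Prime] :
    Ideal.span {x : PAdicRing p | ∃ y ∈ pAdicIdeal p, x = y ^ p} = pAdicIdeal p := by
  refine le_antisymm (pAdicIdeal_pow_le p) ?_
  rw [pAdicIdeal, Ideal.span_le]
  rintro x ⟨m, hm, rfl⟩
  obtain ⟨m', rfl⟩ := pAdicMonoid_exists_nsmul_eq (Fact.out : p.Prime).ne_zero m
  have hm' : m' ≠ 0 := by rintro rfl; simp at hm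
  refine Ideal.subset_span ⟨_, single_one_mem_pAdicIdeal hm', ?_⟩
  rw [AddMonoidAlgebra.single_pow, one_pow]

/-- for `R = 𝔽_p[t^{a/p^b} : a, b > 0]` and `a` the ideal generated by all
`t^{a/p^b}`, one has `a^[p] = a`; consequently the relative Frobenius of `R → R/a` (the
canonical map `R/a^[p] → R/a`) is an isomorphism, but `R → R/a` is not flat. -/
theorem stmt_11 (p : ℕ) [Fact p.Prime] :
    (Ideal.span {x : PAdicRing p | ∃ y ∈ pAdicIdeal p, x = y ^ p} = pAdicIdeal p) ∧
      Function.Bijective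
        (Ideal.Quotient.factor (S := Ideal.span {x : PAdicRing p | ∃ y ∈ pAdicIdeal p, x = y ^ p})
          (T := pAdicIdeal p) (pAdicIdeal_pow_le p)) ∧
      ¬ Module.Flat (PAdicRing p) (PAdicRing p ⧸ pAdicIdeal p) := by
  have hfrob := span_pow_pAdicIdeal p
  refine ⟨hfrob, Ideal.Quotient.factor_bijective_of_eq hfrob _, fun _ => pAdicIdeal_ne_top p ?_⟩
  let one : pAdicMonoid p := ⟨1, pAdicMonoid_one_mem p⟩
  have hone : one ≠ 0 := fun h => one_ne_zero (congrArg Subtype.val h)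
  have ht : AddMonoidAlgebra.single one (1 : ZMod p) ≠ 0 :=
    AddMonoidAlgebra.single_ne_zero.mpr one_ne_zero
  exact Ideal.eq_top_of_isRegular_mem_of_flat (IsRegular.of_ne_zero ht)
    (single_one_mem_pAdicIdeal hone)
end
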